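/- Suppose H = ℝ and α = 3. Then x(t) converges, as t → +∞, to a point of S = argmin Φ; that is, there exists x* ∈ S such that x(t) → x* as t → +∞. -/

import Mathlib

/-!
For every anchor `c`, the energy `E_c(t) = t² (Φ(x) - Φ(c)) + ½ (2 (x - c) + t ẋ)²` has derivative
`2t (Φ(x) - Φ(c) - (x - c) Φ'(x))`, which is `≤ 0` by the tangent-line inequality of the convex `Φ`.
Taking `c = z` a minimizer gives `Φ(x(t)) - min Φ ≤ E_z(t₀) / t²`. If `z` is the only minimizer,
this forces `x(t) → z`, because a convex function on `ℝ` grows away from its unique minimizer.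
Otherwise pick a second minimizer `w ≠ z`: both `E_z` and `E_w` are nonincreasing and nonnegative,
hence converge, and `E_z - E_w` is an affine function of `2x + t ẋ = (t² x)' / t`. So `(t² x)' / t`
has a limit `ℓ`, and then `x(t) = t² x(t) / t² → ℓ / 2`; this limit minimizes `Φ` by continuity.
-/

open Filter Set Topology Asymptotics

namespace ConvexOn

variable {f : ℝ → ℝ}

lemma add_deriv_mul_sub_le {S : Set ℝ} {x y : ℝ} (hf : ConvexOn ℝ S f) (hx : x ∈ S) (hy : y ∈ S)
    (hfx : DifferentiableAt ℝ f x) : f x + deriv f x * (y - x) ≤ f y := by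
  rcases lt_trichotomy x y with hxy | rfl | hxy
  · have := hf.deriv_le_slope hx hy hxy hfx
    rw [slope_def_field, le_div_iff₀ (sub_pos.2 hxy)] at this
    linarith
  · simp
  · have := hf.slope_le_deriv hy hx hxy hfx
    rw [slope_def_field, div_le_iff₀ (sub_pos.2 hxy)] at this
    linarith

lemma tendsto_of_tendsto_comp_of_unique_min {ι : Type*} {l : Filter ι} {u : ι → ℝ} {z : ℝ}
    (hf : ConvexOn ℝ univ f) (hz : ∀ y, f z ≤ f y) (huniq : ∀ w, (∀ y, f w ≤ f y) → w = z)
    (hu : Tendsto (f ∘ u) l (𝓝 (f z))) : Tendsto u l (𝓝 z) := by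
  have hgap : ∀ p, p ≠ z → f z < f p := fun p hp =>
    lt_of_not_ge fun hle => hp (huniq p fun y => hle.trans (hz y))
  have hsegment : ∀ p q, p ∈ segment ℝ z q → f p ≤ f q := fun p q hp =>
    (hf.le_on_segment (mem_univ z) (mem_univ q) hp).trans (max_le (hz q) le_rfl)
  rw [Metric.tendsto_nhds]
  intro ε hε
  have hδ : f z < min (f (z + ε)) (f (z - ε)) :=
    lt_min (hgap _ (by linarith)) (hgap _ (by linarith))
  filter_upwards [hu.eventually (gt_mem_nhds hδ)] with i hi
  rw [Real.dist_eq, abs_lt]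
  constructor
  · by_contra! hle
    have hmem : z - ε ∈ segment ℝ z (u i) := by
      rw [segment_symm, segment_eq_Icc (by linarith)]
      constructor <;> linarith
    exact ((min_le_right _ _).trans (hsegment _ _ hmem)).not_gt hi
  · by_contra! hle
    have hmem : z + ε ∈ segment ℝ z (u i) := by
      rw [segment_eq_Icc (by linarith)]
      constructor <;> linarith
    exact ((min_le_left _ _).trans (hsegment _ _ hmem)).not_gt hi

end ConvexOn

lemma AntitoneOn.exists_tendsto_atTop {f : ℝ → ℝ} {a b : ℝ} (hf : AntitoneOn f (Ici a))
    (hb : ∀ t, a ≤ t → b ≤ f t) : ∃ L, Tendsto f atTop (𝓝 L) := by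
  have hanti : Antitone fun t : Ici a => f t := fun s t hst => hf s.2 t.2 hst
  refine ⟨_, tendsto_comp_val_Ici_atTop.1 (tendsto_atTop_ciInf hanti ⟨b, ?_⟩)⟩
  rintro _ ⟨t, rfl⟩
  exact hb t t.2

lemma isLittleO_sq_of_hasDerivAt {G h : ℝ → ℝ}
    (hG : ∀ᶠ t in atTop, HasDerivAt G (t * h t) t) (hh : Tendsto h atTop (𝓝 0)) :
    G =o[atTop] fun t => t ^ 2 := by
  refine isLittleO_iff.2 fun c hc => ?_
  obtain ⟨T, hT⟩ := eventually_atTop.1 <| hG.and <|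
    (hh.eventually (Metric.closedBall_mem_nhds 0 (half_pos hc))).and (eventually_ge_atTop 0)
  have hincr : ∀ s, T ≤ s → ‖G s - G T‖ ≤ c / 2 * s ^ 2 := by
    intro s hs
    have hbound : ∀ u ∈ Ico T s, ‖u * h u‖ ≤ c / 2 * s := by
      intro u hu
      obtain ⟨-, hhu, hu0⟩ := hT u hu.1
      rw [dist_zero_right] at hhu
      rw [norm_mul, Real.norm_of_nonneg hu0, mul_comm]
      exact mul_le_mul hhu hu.2.le hu0 (half_pos hc).le
    have := norm_image_sub_le_of_norm_deriv_le_segment'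
      (fun u hu => (hT u hu.1).1.hasDerivWithinAt) hbound s ⟨hs, le_rfl⟩
    have hT0 := (hT T le_rfl).2.2
    nlinarith [mul_nonneg (mul_nonneg hc.le (hT0.trans hs)) hT0]
  filter_upwards [eventually_ge_atTop T,
    (tendsto_pow_atTop two_ne_zero).eventually_ge_atTop (2 / c * ‖G T‖)] with s hs hs2
  have hGT : ‖G T‖ ≤ c / 2 * s ^ 2 := by
    rw [div_mul_eq_mul_div, div_le_iff₀ hc] at hs2
    linarith
  calc ‖G s‖ ≤ ‖G T‖ + ‖G s - G T‖ := norm_le_norm_add_norm_sub' _ _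
    _ ≤ c * ‖s ^ 2‖ := by rw [Real.norm_of_nonneg (sq_nonneg s)]; linarith [hincr s hs]

lemma tendsto_div_sq_of_hasDerivAt {F g : ℝ → ℝ} {L : ℝ}
    (hF : ∀ᶠ t in atTop, HasDerivAt F (t * g t) t) (hg : Tendsto g atTop (𝓝 L)) :
    Tendsto (fun t => F t / t ^ 2) atTop (𝓝 (L / 2)) := by
  have hG : ∀ᶠ t in atTop, HasDerivAt (fun t => F t - L / 2 * t ^ 2) (t * (g t - L)) t := by
    filter_upwards [hF] with t ht
    refine (ht.sub ((hasDerivAt_pow 2 t).const_mul (L / 2))).congr_deriv ?_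
    push_cast
    ring
  have hlim :=
    (isLittleO_sq_of_hasDerivAt hG (by simpa using hg.sub_const L)).tendsto_div_nhds_zero
  rw [← zero_add (L / 2)]
  refine (hlim.add_const (L / 2)).congr' ?_
  filter_upwards [eventually_ne_atTop 0] with t ht
  field_simp
  ring

structure IsAVD3Solution (Φ : ℝ → ℝ) (t₀ : ℝ) (x : ℝ → ℝ) : Prop where
  pos : 0 < t₀
  differentiable : Differentiable ℝ x
  differentiable_deriv : Differentiable ℝ (deriv x)
  ode : ∀ t, t₀ ≤ t → deriv (deriv x) t + 3 / t * deriv x t + deriv Φ (x t) = 0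

/-- The Su–Boyd–Candès Lyapunov function `t² (Φ(x) - Φ(c)) + 2 |x - c + t ẋ / 2|²`. -/
noncomputable def avdEnergy (Φ x : ℝ → ℝ) (c t : ℝ) : ℝ :=
  t ^ 2 * (Φ (x t) - Φ c) + 1 / 2 * (2 * (x t - c) + t * deriv x t) ^ 2

lemma avdEnergy_nonneg {Φ x : ℝ → ℝ} {c : ℝ} (hc : ∀ y, Φ c ≤ Φ y) (t : ℝ) :
    0 ≤ avdEnergy Φ x c t :=
  add_nonneg (mul_nonneg (sq_nonneg t) (sub_nonneg.2 (hc _))) (by positivity)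

namespace IsAVD3Solution

variable {Φ x : ℝ → ℝ} {t₀ : ℝ}

lemma hasDerivAt_avdEnergy (hx : IsAVD3Solution Φ t₀ x) (hΦd : Differentiable ℝ Φ) (c : ℝ)
    {t : ℝ} (ht : t₀ ≤ t) :
    HasDerivAt (avdEnergy Φ x c) (2 * t * (Φ (x t) - Φ c - (x t - c) * deriv Φ (x t))) t := by
  have ht0 : t ≠ 0 := (hx.pos.trans_le ht).ne'
  have hxt := (hx.differentiable t).hasDerivAt
  have hpot := ((hasDerivAt_pow 2 t).mul (((hΦd (x t)).hasDerivAt.comp t hxt).sub_const (Φ c)))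
  have hkin := ((((hxt.sub_const c).const_mul 2).add
    ((hasDerivAt_id t).mul (hx.differentiable_deriv t).hasDerivAt)).pow 2).const_mul (1 / 2 : ℝ)
  refine (hpot.add hkin).congr_deriv ?_
  have hacc : deriv (deriv x) t = -(3 / t) * deriv x t - deriv Φ (x t) := by
    linarith [hx.ode t ht]
  simp only [Function.comp_apply, Pi.add_apply, Pi.mul_apply, id, hacc]
  field_simp
  ring

lemma antitoneOn_avdEnergy (hx : IsAVD3Solution Φ t₀ x) (hΦ : ConvexOn ℝ univ Φ)
    (hΦd : Differentiable ℝ Φ) (c : ℝ) :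
    AntitoneOn (avdEnergy Φ x c) (Ici t₀) := by
  have hE := fun t (ht : t ∈ Ici t₀) => hx.hasDerivAt_avdEnergy hΦd c ht
  refine antitoneOn_of_deriv_nonpos (convex_Ici t₀)
    (fun t ht => (hE t ht).continuousAt.continuousWithinAt)
    (fun t ht => (hE t (interior_subset ht)).differentiableAt.differentiableWithinAt) ?_
  intro t ht
  rw [interior_Ici] at ht
  rw [(hE t (mem_Ici.2 (le_of_lt ht))).deriv]
  have htangent := hΦ.add_deriv_mul_sub_le (mem_univ (x t)) (mem_univ c) (hΦd (x t))
  have htpos : 0 < t := hx.pos.trans ht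
  nlinarith

lemma tendsto_comp_of_forall_le (hx : IsAVD3Solution Φ t₀ x) (hΦ : ConvexOn ℝ univ Φ)
    (hΦd : Differentiable ℝ Φ) {z : ℝ} (hz : ∀ y, Φ z ≤ Φ y) :
    Tendsto (Φ ∘ x) atTop (𝓝 (Φ z)) := by
  have hdecay : ∀ᶠ t in atTop, Φ (x t) ≤ Φ z + avdEnergy Φ x z t₀ / t ^ 2 := by
    filter_upwards [eventually_ge_atTop t₀] with t ht
    have hle := hx.antitoneOn_avdEnergy hΦ hΦd z self_mem_Ici ht ht
    rw [← sub_le_iff_le_add', le_div_iff₀ (pow_pos (hx.pos.trans_le ht) 2)]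
    unfold avdEnergy at hle ⊢
    nlinarith [sq_nonneg (2 * (x t - z) + t * deriv x t)]
  have hlim : Tendsto (fun t : ℝ => Φ z + avdEnergy Φ x z t₀ / t ^ 2) atTop (𝓝 (Φ z)) := by
    simpa using (tendsto_const_nhds (x := Φ z)).add
      ((tendsto_const_nhds (x := avdEnergy Φ x z t₀)).div_atTop (tendsto_pow_atTop two_ne_zero))
  exact tendsto_of_tendsto_of_tendsto_of_le_of_le' tendsto_const_nhds hlim
    (Eventually.of_forall fun t => hz (x t)) hdecay

lemma exists_tendsto_of_forall_le_of_ne (hx : IsAVD3Solution Φ t₀ x) (hΦ : ConvexOn ℝ univ Φ)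
    (hΦd : Differentiable ℝ Φ) {z w : ℝ} (hz : ∀ y, Φ z ≤ Φ y) (hw : ∀ y, Φ w ≤ Φ y)
    (hzw : z ≠ w) : ∃ L, Tendsto x atTop (𝓝 L) := by
  obtain ⟨Ez, hEz⟩ := (hx.antitoneOn_avdEnergy hΦ hΦd z).exists_tendsto_atTop
    fun t _ => avdEnergy_nonneg hz t
  obtain ⟨Ew, hEw⟩ := (hx.antitoneOn_avdEnergy hΦ hΦd w).exists_tendsto_atTop
    fun t _ => avdEnergy_nonneg hw t
  have hΦzw : Φ z = Φ w := le_antisymm (hz w) (hw z)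
  have hdiff : ∀ t, 2 * x t + t * deriv x t =
      (avdEnergy Φ x z t - avdEnergy Φ x w t) / (2 * (w - z)) + (z + w) := by
    intro t
    have : w - z ≠ 0 := sub_ne_zero.2 hzw.symm
    unfold avdEnergy
    rw [hΦzw]
    field_simp
    ring
  have hmom : Tendsto (fun t => 2 * x t + t * deriv x t) atTop
      (𝓝 ((Ez - Ew) / (2 * (w - z)) + (z + w))) := by
    simp_rw [hdiff]
    exact ((hEz.sub hEw).div_const _).add_const _
  have hF : ∀ᶠ t in atTop, HasDerivAt (fun t => t ^ 2 * x t) (t * (2 * x t + t * deriv x t)) t :=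
    Eventually.of_forall fun t =>
      ((hasDerivAt_pow 2 t).mul (hx.differentiable t).hasDerivAt).congr_deriv (by ring)
  refine ⟨_, (tendsto_div_sq_of_hasDerivAt hF hmom).congr' ?_⟩
  filter_upwards [eventually_ne_atTop 0] with t ht
  field_simp

end IsAVD3Solution

/-- in dimension one, for `α = 3`, any trajectory of `(AVD)_3`
converges, as `t → ∞`, to a minimizer of `Φ`. -/
theorem stmt_11
    (Φ : ℝ → ℝ) (hΦconv : ConvexOn ℝ Set.univ Φ) (hΦC1 : ContDiff ℝ 1 Φ)
    (hSne : {z : ℝ | ∀ y : ℝ, Φ z ≤ Φ y}.Nonempty)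
    (t₀ : ℝ) (ht₀ : 0 < t₀)
    (x : ℝ → ℝ) (hx : ContDiff ℝ 2 x)
    (hode : ∀ t : ℝ, t₀ ≤ t →
      deriv (deriv x) t + ((3 : ℝ) / t) * deriv x t + deriv Φ (x t) = 0) :
    ∃ xs : ℝ, (∀ y : ℝ, Φ xs ≤ Φ y) ∧
      Filter.Tendsto x Filter.atTop (nhds xs) := by
  obtain ⟨z, hz⟩ := hSne
  have hΦd : Differentiable ℝ Φ := hΦC1.differentiable one_ne_zero
  have hsol : IsAVD3Solution Φ t₀ x :=
    ⟨ht₀, hx.differentiable two_ne_zero, hx.differentiable_deriv_two, hode⟩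
  have hΦx := hsol.tendsto_comp_of_forall_le hΦconv hΦd hz
  by_cases huniq : ∀ w, (∀ y, Φ w ≤ Φ y) → w = z
  · exact ⟨z, hz, hΦconv.tendsto_of_tendsto_comp_of_unique_min hz huniq hΦx⟩
  push Not at huniq
  obtain ⟨w, hw, hwz⟩ := huniq
  obtain ⟨L, hL⟩ := hsol.exists_tendsto_of_forall_le_of_ne hΦconv hΦd hz hw hwz.symm
  refine ⟨L, fun y => ?_, hL⟩
  rw [tendsto_nhds_unique ((hΦd.continuous.tendsto L).comp hL) hΦx]
  exact hz y
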